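/- Let (X, Σ, λ) be a measure space and let f, g : X → ℂ be integrable. Then f is Birkhoff-James orthogonal to g in L¹(X, λ) (i.e., ∫ |f + c·g| dλ ≥ ∫ |f| dλ for every c ∈ ℂ) if and only if |∫_X conj(sgn(f(x)))·g(x) dλ(x)| ≤ ∫_{ {x : f(x) = 0} } |g(x)| dλ(x). -/

import Mathlib

/-!
Write `Φ c = ∫ ‖f + c g‖`, `I = ∫ conj (sgn f) g` and `N = ∫_{f = 0} ‖g‖`. Pointwise, the right
derivative of `t ↦ ‖z + t w‖` at `0` is `Re (conj (sgn z) w)` if `z ≠ 0` and `‖w‖` if `z = 0`, and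
by convexity of the modulus it bounds the increment `‖z + w‖ - ‖z‖` from below. Integrating,
`Φ c - Φ 0 ≥ Re (c I) + ‖c‖ N`, and by dominated convergence `(Φ (t c) - Φ 0) / t` tends to
`Re (c I) + ‖c‖ N` as `t → 0⁺`. So `Φ` is minimal at `0` iff `Re (c I) + ‖c‖ N ≥ 0` for every `c`,
which (test `c = -conj I`) means `‖I‖ ≤ N`.
-/

open MeasureTheory

/-- The sign function on `ℂ`: `sgn z = z / |z|` for `z ≠ 0` and `sgn 0 = 0`. -/
noncomputable def csgn (z : ℂ) : ℂ := if z = 0 then 0 else z / ((‖z‖ : ℝ) : ℂ)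

open Filter Topology ComplexConjugate

lemma norm_csgn_le_one (z : ℂ) : ‖csgn z‖ ≤ 1 := by
  unfold csgn
  split_ifs with hz <;> simp [hz]

lemma conj_csgn_mul_self (z : ℂ) : conj (csgn z) * z = ‖z‖ := by
  unfold csgn
  split_ifs with hz
  · simp [hz]
  · rw [map_div₀, Complex.conj_ofReal, div_mul_eq_mul_div, Complex.conj_mul']
    have : (‖z‖ : ℂ) ≠ 0 := by exact_mod_cast norm_ne_zero_iff.mpr hz
    field_simp

lemma measurable_csgn : Measurable csgn :=
  Measurable.ite (measurableSet_singleton 0) measurable_const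
    (measurable_id.div (Complex.measurable_ofReal.comp measurable_norm))

lemma hasDerivAt_norm_add_smul {E : Type*} [NormedAddCommGroup E] [InnerProductSpace ℝ E]
    {z : E} (hz : z ≠ 0) (w : E) :
    HasDerivAt (fun t : ℝ => ‖z + t • w‖) (inner ℝ z w / ‖z‖) 0 := by
  have hsq : HasDerivAt (fun t : ℝ => ‖z + t • w‖ ^ 2) (2 * inner ℝ z w) 0 := by
    simpa using ((hasDerivAt_id (0 : ℝ)).smul_const w).const_add z |>.norm_sq
  have hz2 : ‖z + (0 : ℝ) • w‖ ^ 2 ≠ 0 := by simpa using hz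
  convert hsq.sqrt hz2 using 1
  · funext t; rw [Real.sqrt_sq (norm_nonneg _)]
  · rw [zero_smul, add_zero, Real.sqrt_sq (norm_nonneg _)]; ring

noncomputable def normDirDeriv (z w : ℂ) : ℝ :=
  (conj (csgn z) * w).re + if z = 0 then ‖w‖ else 0

lemma norm_add_normDirDeriv_le (z w : ℂ) : ‖z‖ + normDirDeriv z w ≤ ‖z + w‖ := by
  unfold normDirDeriv
  split_ifs with hz
  · simp [hz, csgn]
  · calc ‖z‖ + ((conj (csgn z) * w).re + 0) = (conj (csgn z) * (z + w)).re := by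
          rw [mul_add, conj_csgn_mul_self, Complex.add_re, Complex.ofReal_re, add_zero]
      _ ≤ ‖conj (csgn z) * (z + w)‖ := Complex.re_le_norm _
      _ ≤ ‖z + w‖ := by
          rw [norm_mul, Complex.norm_conj]
          exact mul_le_of_le_one_left (norm_nonneg _) (norm_csgn_le_one z)

lemma tendsto_slope_norm_add_mul (z w : ℂ) :
    Tendsto (fun t : ℝ => (‖z + t * w‖ - ‖z‖) / t) (𝓝[>] 0) (𝓝 (normDirDeriv z w)) := by
  by_cases hz : z = 0
  · refine tendsto_const_nhds.congr' ?_
    filter_upwards [self_mem_nhdsWithin] with t (ht : 0 < t)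
    simp [normDirDeriv, hz, csgn, abs_of_pos ht, ht.ne']
  · have hderiv : normDirDeriv z w = inner ℝ z w / ‖z‖ := by
      rw [normDirDeriv, if_neg hz, add_zero, Complex.inner, csgn, if_neg hz, map_div₀,
        Complex.conj_ofReal, div_mul_eq_mul_div, Complex.div_ofReal_re, mul_comm]
    rw [hderiv]
    refine ((hasDerivAt_iff_tendsto_slope_zero.mp (hasDerivAt_norm_add_smul hz w)).mono_left
      (nhdsWithin_mono 0 fun t (ht : 0 < t) => ht.ne')).congr fun t => ?_
    simp [div_eq_inv_mul, Complex.real_smul]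

lemma re_mul_add_norm_mul_nonneg_iff {I : ℂ} {N : ℝ} (hN : 0 ≤ N) :
    (∀ c : ℂ, 0 ≤ (c * I).re + ‖c‖ * N) ↔ ‖I‖ ≤ N := by
  constructor
  · intro h
    have := h (-conj I)
    rw [neg_mul, Complex.neg_re, Complex.conj_mul', norm_neg, Complex.norm_conj] at this
    norm_cast at this
    nlinarith [norm_nonneg I]
  · intro h c
    have h1 : -(c * I).re ≤ ‖c‖ * ‖I‖ := by
      simpa using Complex.re_le_norm (-(c * I))
    nlinarith [norm_nonneg c]

section Integral

variable {X : Type*} [MeasurableSpace X] {μ : Measure X} {f g : X → ℂ}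

lemma integrable_conj_csgn_mul (hf : AEMeasurable f μ) (hg : Integrable g μ) :
    Integrable (fun x => conj (csgn (f x)) * g x) μ :=
  hg.bdd_mul (c := 1) (Complex.continuous_conj.measurable.comp_aemeasurable
    (measurable_csgn.comp_aemeasurable hf)).aestronglyMeasurable
    (ae_of_all _ fun x => by simpa using norm_csgn_le_one (f x))

lemma integrable_normDirDeriv (hf : AEMeasurable f μ) (hg : Integrable g μ) :
    Integrable (fun x => normDirDeriv (f x) (g x)) μ :=
  (integrable_conj_csgn_mul hf hg).re.add
    (hg.norm.indicator₀ (hf.nullMeasurable (measurableSet_singleton 0)))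

lemma integral_normDirDeriv (hf : AEMeasurable f μ) (hg : Integrable g μ) :
    ∫ x, normDirDeriv (f x) (g x) ∂μ =
      (∫ x, conj (csgn (f x)) * g x ∂μ).re + ∫ x in {x | f x = 0}, ‖g x‖ ∂μ := by
  have hZ : NullMeasurableSet {x | f x = 0} μ := hf.nullMeasurable (measurableSet_singleton 0)
  have hre := integral_re (integrable_conj_csgn_mul hf hg)
  simp only [RCLike.re_to_complex] at hre
  rw [← integral_indicator₀ hZ, ← hre]
  exact integral_add (integrable_conj_csgn_mul hf hg).re (hg.norm.indicator₀ hZ)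

lemma integral_norm_add_integral_normDirDeriv_le (hf : Integrable f μ) (hg : Integrable g μ) :
    ∫ x, ‖f x‖ ∂μ + ∫ x, normDirDeriv (f x) (g x) ∂μ ≤ ∫ x, ‖f x + g x‖ ∂μ := by
  rw [← integral_add hf.norm (integrable_normDirDeriv hf.aemeasurable hg)]
  exact integral_mono (hf.norm.add (integrable_normDirDeriv hf.aemeasurable hg))
    (hf.add hg).norm fun x => norm_add_normDirDeriv_le (f x) (g x)

lemma tendsto_slope_integral_norm_add_mul (hf : Integrable f μ) (hg : Integrable g μ) :
    Tendsto (fun t : ℝ => (∫ x, ‖f x + t * g x‖ ∂μ - ∫ x, ‖f x‖ ∂μ) / t) (𝓝[>] 0)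
      (𝓝 (∫ x, normDirDeriv (f x) (g x) ∂μ)) := by
  have hslope : ∀ t : ℝ, (∫ x, ‖f x + t * g x‖ ∂μ - ∫ x, ‖f x‖ ∂μ) / t =
      ∫ x, (‖f x + t * g x‖ - ‖f x‖) / t ∂μ := fun t => by
    have hint : Integrable (fun x => ‖f x + t * g x‖) μ := (hf.add (hg.const_mul _)).norm
    rw [integral_div, integral_sub hint hf.norm]
  simp_rw [hslope]
  refine tendsto_integral_filter_of_dominated_convergence (fun x => ‖g x‖)
    (Eventually.of_forall fun t => by fun_prop) ?_ hg.norm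
    (ae_of_all _ fun x => tendsto_slope_norm_add_mul (f x) (g x))
  filter_upwards [self_mem_nhdsWithin] with t (ht : 0 < t)
  refine ae_of_all _ fun x => ?_
  rw [Real.norm_eq_abs, abs_div, abs_of_pos ht, div_le_iff₀ ht]
  calc |‖f x + t * g x‖ - ‖f x‖| ≤ ‖(t : ℂ) * g x‖ := by
        simpa using abs_norm_sub_norm_le (f x + t * g x) (f x)
    _ = ‖g x‖ * t := by rw [norm_mul, Complex.norm_real, Real.norm_of_nonneg ht.le, mul_comm]

end Integral

/-- **Birkhoff-James orthogonality in `L¹`.** For integrable `f, g : X → ℂ`,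
`f ⊥_B g` in `L¹(X, μ)` iff
`|∫ conj (sgn (f x)) * g x dμ| ≤ ∫_{f = 0} |g| dμ`. -/
theorem birkhoff_orthogonality_L1 (X : Type*) [MeasurableSpace X] (μ : Measure X)
    (f g : X → ℂ) (hf : Integrable f μ) (hg : Integrable g μ) :
    (∀ c : ℂ, ∫ x, ‖f x‖ ∂μ ≤ ∫ x, ‖f x + c * g x‖ ∂μ) ↔
      ‖∫ x, (starRingEnd ℂ) (csgn (f x)) * g x ∂μ‖ ≤
        ∫ x in {x : X | f x = 0}, ‖g x‖ ∂μ := by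
  set I := ∫ x, conj (csgn (f x)) * g x ∂μ
  set N := ∫ x in {x : X | f x = 0}, ‖g x‖ ∂μ
  have hD : ∀ c : ℂ, ∫ x, normDirDeriv (f x) (c * g x) ∂μ = (c * I).re + ‖c‖ * N := by
    intro c
    simp_rw [integral_normDirDeriv hf.aemeasurable (hg.const_mul c), norm_mul, mul_left_comm _ c,
      integral_const_mul]
    rfl
  rw [← re_mul_add_norm_mul_nonneg_iff (integral_nonneg fun _ => norm_nonneg _)]
  refine ⟨fun h c => ?_, fun h c => ?_⟩
  · rw [← hD c]
    refine ge_of_tendsto (tendsto_slope_integral_norm_add_mul hf (hg.const_mul c)) ?_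
    filter_upwards [self_mem_nhdsWithin] with t (ht : 0 < t)
    have ht' := h (t * c)
    simp_rw [mul_assoc] at ht'
    exact div_nonneg (sub_nonneg.2 ht') ht.le
  · linarith [integral_norm_add_integral_normDirDeriv_le hf (hg.const_mul c), hD c, h c]
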